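/- arXiv:0809.3568 — 2 statements merged into one kernel-verified Lean document; each statement's English description precedes it below -/
import Mathlib

section
/- Let 𝔤 = {X ∈ M₅(ℝ) : XᵀM + MX = 0}, where M = diag(−1,1,1,1,1). The linear map Φ : 𝔤 × ℝ^N → (ℝ⁵)^N defined by Φ(X, (c_n)) = (X n + c_n n)_{n∈N} is injective, and its image is contained in W. Consequently dim W ≥ dim 𝔤 + 96 = 106. -/
noncomputable section

open Matrix

/-- The Minkowski bilinear form of signature (1,4) on ℝ⁵. -/
def Bform (x y : Fin 5 → ℝ) : ℝ :=
  -(x 0 * y 0) + x 1 * y 1 + x 2 * y 2 + x 3 * y 3 + x 4 * y 4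

/-- The golden ratio τ = (1+√5)/2. -/
def gold : ℝ := (1 + Real.sqrt 5) / 2

/-- The 96-element set N of vectors obtained by applying even permutations of the last
4 coordinates to (√(2τ), ±τ, ±1, ±τ⁻¹, 0), with all 8 sign choices. -/
def Nset : Set (Fin 5 → ℝ) :=
  {v | ∃ σ : Equiv.Perm (Fin 4), Equiv.Perm.sign σ = 1 ∧
    ∃ ε : Fin 3 → ℝ, (∀ i, ε i = 1 ∨ ε i = -1) ∧
      v = Fin.cons (Real.sqrt (2 * gold))
            (fun i => ![ε 0 * gold, ε 1, ε 2 * gold⁻¹, 0] (σ i))}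

/-- The space W of infinitesimal deformations. -/
def Wsub : Submodule ℝ ((↥Nset) → Fin 5 → ℝ) where
  carrier := {w | ∀ m n : ↥Nset, m ≠ n → Bform m n = 0 →
    Bform (w m) (n : Fin 5 → ℝ) + Bform (m : Fin 5 → ℝ) (w n) = 0}
  add_mem' := by
    intro a b ha hb m n hmn h
    have h1 := ha m n hmn h
    have h2 := hb m n hmn h
    simp only [Bform, Pi.add_apply] at h1 h2 ⊢
    linarith
  zero_mem' := by
    intro m n hmn h
    simp [Bform]
  smul_mem' := by
    intro c a ha m n hmn h
    have h1 := ha m n hmn h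
    simp only [Bform, Pi.smul_apply, smul_eq_mul] at h1 ⊢
    linear_combination c * h1

/-- The matrix M = diag(−1,1,1,1,1) of the Minkowski form. -/
def Mink : Matrix (Fin 5) (Fin 5) ℝ := Matrix.diagonal ![-1, 1, 1, 1, 1]

/-- The Lie algebra 𝔤 = {X : Xᵀ M + M X = 0} of O(1,4). -/
def gSet : Submodule ℝ (Matrix (Fin 5) (Fin 5) ℝ) where
  carrier := {X | Xᵀ * Mink + Mink * X = 0}
  add_mem' := by
    intro X Y hX hY
    simp only [Set.mem_setOf_eq] at hX hY ⊢
    rw [Matrix.transpose_add, Matrix.add_mul, Matrix.mul_add]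
    have : Xᵀ * Mink + Yᵀ * Mink + (Mink * X + Mink * Y)
        = (Xᵀ * Mink + Mink * X) + (Yᵀ * Mink + Mink * Y) := by abel
    rw [this, hX, hY, add_zero]
  zero_mem' := by simp
  smul_mem' := by
    intro c X hX
    simp only [Set.mem_setOf_eq] at hX ⊢
    rw [Matrix.transpose_smul, Matrix.smul_mul, Matrix.mul_smul, ← smul_add, hX, smul_zero]

/-- The map Φ(X, (c_n)) = (X n + c_n n)_{n ∈ N}. -/
def Phi : (↥gSet × (↥Nset → ℝ)) → (↥Nset → Fin 5 → ℝ) :=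
  fun p n => (p.1 : Matrix (Fin 5) (Fin 5) ℝ).mulVec (n : Fin 5 → ℝ) + p.2 n • (n : Fin 5 → ℝ)


/-!
Φ lands in W because every X ∈ 𝔤 is skew for B and rescaling a vector preserves orthogonality.
For injectivity, B(Xn, n) = 0 for X ∈ 𝔤, so X n + c_n n = 0 forces c_n B(n, n) = 0, and
B(n, n) = 4 − 2τ ≠ 0 for n ∈ N; then X vanishes on N, which spans ℝ⁵. For the dimension count,
X ↦ M X identifies 𝔤 with the skew-symmetric 5 × 5 matrices, a space of dimension 10, and
|N| = 12 · 8 (even permutations times signs), as the pattern (τ, 1, τ⁻¹, 0) has entries of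
distinct absolute values.
-/

section SkewSymmetric

variable {n R : Type*} [Fintype n] [DecidableEq n] [CommRing R]

theorem mem_skewAdjointMatricesSubmodule_one {A : Matrix n n R} :
    A ∈ skewAdjointMatricesSubmodule (1 : Matrix n n R) ↔ Aᵀ = -A := by
  rw [mem_skewAdjointMatricesSubmodule, Matrix.IsSkewAdjoint, Matrix.IsAdjointPair, mul_one,
    one_mul]

def skewAdjointEquivOfInvolutive (J : Matrix n n R) (hJt : Jᵀ = J) (hJ : J * J = 1) :
    skewAdjointMatricesSubmodule J ≃ₗ[R] skewAdjointMatricesSubmodule (1 : Matrix n n R) where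
  toFun X := ⟨J * X.1, by
    have hX : X.1ᵀ * J = J * -X.1 := (mem_skewAdjointMatricesSubmodule J X.1).1 X.2
    rw [mem_skewAdjointMatricesSubmodule_one, transpose_mul, hJt, hX, mul_neg]⟩
  map_add' X Y := Subtype.ext (mul_add J X.1 Y.1)
  map_smul' c X := Subtype.ext (mul_smul_comm c J X.1)
  invFun A := ⟨J * A.1, by
    rw [mem_skewAdjointMatricesSubmodule, Matrix.IsSkewAdjoint, Matrix.IsAdjointPair,
      transpose_mul, hJt, mul_assoc, hJ, mul_one, mem_skewAdjointMatricesSubmodule_one.1 A.2,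
      mul_neg, ← mul_assoc, hJ, one_mul]⟩
  left_inv X := Subtype.ext (by simp only [← mul_assoc, hJ, one_mul])
  right_inv A := Subtype.ext (by simp only [← mul_assoc, hJ, one_mul])

variable [LinearOrder n] [NoZeroDivisors R] [CharZero R]

def skewSymmetricEquivStrictUpper :
    skewAdjointMatricesSubmodule (1 : Matrix n n R) ≃ₗ[R] ({p : n × n // p.1 < p.2} → R) where
  toFun A p := A.1 p.1.1 p.1.2
  map_add' _ _ := rfl
  map_smul' _ _ := rfl
  invFun c := ⟨Matrix.of fun i j =>
      if h : i < j then c ⟨(i, j), h⟩ else if h' : j < i then -c ⟨(j, i), h'⟩ else 0, by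
    rw [mem_skewAdjointMatricesSubmodule_one]
    ext i j
    rcases lt_trichotomy i j with h | rfl | h
    · simp [h, h.not_gt]
    · simp
    · simp [h, h.not_gt]⟩
  left_inv := by
    rintro ⟨A, hA⟩
    have hA' (i j : n) : A j i = -A i j := by
      simpa using congrFun (congrFun (mem_skewAdjointMatricesSubmodule_one.1 hA) i) j
    ext i j
    rcases lt_trichotomy i j with h | rfl | h
    · simp [h]
    · simpa [eq_comm] using CharZero.eq_neg_self_iff.1 (hA' i i)
    · simp [h, h.not_gt, hA' j i]
  right_inv c := by
    ext ⟨⟨i, j⟩, h⟩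
    simp [h]

theorem finrank_skewSymmetric {K : Type*} [Field K] [CharZero K] :
    Module.finrank K (skewAdjointMatricesSubmodule (1 : Matrix n n K)) =
      Fintype.card {p : n × n // p.1 < p.2} := by
  rw [skewSymmetricEquivStrictUpper.finrank_eq, Module.finrank_fintype_fun_eq_card]

end SkewSymmetric

theorem Matrix.eq_zero_of_mulVec_eq_zero_of_span_eq_top {m n R : Type*} [Fintype n]
    [DecidableEq n] [CommRing R] {s : Set (n → R)} (hs : Submodule.span R s = ⊤)
    {X : Matrix m n R} (hX : ∀ v ∈ s, X *ᵥ v = 0) : X = 0 :=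
  Matrix.toLin'.injective <| LinearMap.ext_on hs fun v hv => by simpa using hX v hv

theorem gSet_eq_skewAdjoint : gSet = skewAdjointMatricesSubmodule Mink := by
  ext X
  rw [mem_skewAdjointMatricesSubmodule, Matrix.IsSkewAdjoint, Matrix.IsAdjointPair, mul_neg,
    ← add_eq_zero_iff_eq_neg]
  rfl

theorem transpose_Mink : Minkᵀ = Mink := diagonal_transpose _

theorem Mink_mul_Mink : Mink * Mink = 1 := by
  rw [Mink, diagonal_mul_diagonal, ← diagonal_one]
  congr 1
  ext i
  fin_cases i <;> norm_num

theorem finrank_gSet : Module.finrank ℝ gSet = 10 := by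
  rw [gSet_eq_skewAdjoint,
    (skewAdjointEquivOfInvolutive Mink transpose_Mink Mink_mul_Mink).finrank_eq,
    finrank_skewSymmetric]
  rfl

theorem Bform_eq_dotProduct (x y : Fin 5 → ℝ) : Bform x y = x ⬝ᵥ (Mink *ᵥ y) := by
  simp [Bform, Mink, dotProduct, mulVec_diagonal, Fin.sum_univ_five]

theorem Bform_comm (x y : Fin 5 → ℝ) : Bform x y = Bform y x := by
  simp only [Bform]; ring

theorem Bform_add_left (x y z : Fin 5 → ℝ) : Bform (x + y) z = Bform x z + Bform y z := by
  simp only [Bform, Pi.add_apply]; ring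

theorem Bform_smul_left (c : ℝ) (x y : Fin 5 → ℝ) : Bform (c • x) y = c * Bform x y := by
  simp only [Bform, Pi.smul_apply, smul_eq_mul]; ring

theorem Bform_self_eq (v : Fin 5 → ℝ) :
    Bform v v = -(v 0 * v 0) + ∑ i : Fin 4, v i.succ * v i.succ := by
  simp [Bform, Fin.sum_univ_four]
  ring

theorem Bform_mulVec_add_Bform_mulVec {X : Matrix (Fin 5) (Fin 5) ℝ} (hX : X ∈ gSet)
    (u v : Fin 5 → ℝ) : Bform (X *ᵥ u) v + Bform u (X *ᵥ v) = 0 := by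
  have hX' : Xᵀ * Mink + Mink * X = 0 := hX
  rw [Bform_eq_dotProduct, Bform_eq_dotProduct, ← vecMul_transpose, ← dotProduct_mulVec,
    mulVec_mulVec, mulVec_mulVec, ← dotProduct_add, ← add_mulVec, hX', zero_mulVec,
    dotProduct_zero]

theorem Bform_mulVec_self {X : Matrix (Fin 5) (Fin 5) ℝ} (hX : X ∈ gSet) (v : Fin 5 → ℝ) :
    Bform (X *ᵥ v) v = 0 := by
  have h := Bform_mulVec_add_Bform_mulVec hX v v
  rw [Bform_comm v] at h
  linarith

theorem gold_eq_goldenRatio : gold = Real.goldenRatio := rfl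

theorem gold_pos : 0 < gold := Real.goldenRatio_pos

theorem one_lt_gold : 1 < gold := Real.one_lt_goldenRatio

theorem gold_lt_two : gold < 2 := Real.goldenRatio_lt_two

theorem gold_sq : gold ^ 2 = gold + 1 := Real.goldenRatio_sq

theorem inv_gold : gold⁻¹ = gold - 1 := by
  rw [gold_eq_goldenRatio, Real.inv_goldenRatio, ← Real.one_sub_goldenConj]
  ring

def signedCoords (ε : Fin 3 → ℝ) : Fin 4 → ℝ := ![ε 0 * gold, ε 1, ε 2 * gold⁻¹, 0]

def normalVec (σ : Equiv.Perm (Fin 4)) (ε : Fin 3 → ℝ) : Fin 5 → ℝ :=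
  Fin.cons (Real.sqrt (2 * gold)) (signedCoords ε ∘ σ)

theorem mem_Nset {v : Fin 5 → ℝ} : v ∈ Nset ↔ ∃ σ : Equiv.Perm (Fin 4), σ.sign = 1 ∧
    ∃ ε : Fin 3 → ℝ, (∀ i, ε i = 1 ∨ ε i = -1) ∧ v = normalVec σ ε := Iff.rfl

theorem sum_signedCoords_mul_self {ε : Fin 3 → ℝ} (hε : ∀ i, ε i = 1 ∨ ε i = -1) :
    ∑ i, signedCoords ε i * signedCoords ε i = 4 := by
  have hsq (i : Fin 3) : ε i * ε i = 1 := by rcases hε i with h | h <;> simp [h]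
  simp only [Fin.sum_univ_four, signedCoords]
  simp [inv_gold]
  linear_combination gold ^ 2 * hsq 0 + hsq 1 + (gold - 1) ^ 2 * hsq 2 + 2 * gold_sq

theorem Bform_self_of_mem_Nset {v : Fin 5 → ℝ} (hv : v ∈ Nset) : Bform v v = 4 - 2 * gold := by
  obtain ⟨σ, -, ε, hε, rfl⟩ := mem_Nset.1 hv
  rw [Bform_self_eq, normalVec, Fin.cons_zero]
  simp only [Fin.cons_succ]
  rw [Real.mul_self_sqrt (by linarith [gold_pos]), Function.comp_def,
    Equiv.sum_comp σ (fun j => signedCoords ε j * signedCoords ε j),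
    sum_signedCoords_mul_self hε]
  ring

theorem Bform_self_ne_zero_of_mem_Nset {v : Fin 5 → ℝ} (hv : v ∈ Nset) : Bform v v ≠ 0 := by
  rw [Bform_self_of_mem_Nset hv]
  linarith [gold_lt_two]

theorem abs_signedCoords {ε : Fin 3 → ℝ} (hε : ∀ i, ε i = 1 ∨ ε i = -1) (j : Fin 4) :
    |signedCoords ε j| = signedCoords 1 j := by
  have habs (i : Fin 3) : |ε i| = 1 := by rcases hε i with h | h <;> simp [h]
  fin_cases j <;> simp [signedCoords, abs_mul, habs, abs_of_pos gold_pos]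

theorem signedCoords_one_injective : Function.Injective (signedCoords 1) := by
  have h1 := one_lt_gold
  have h2 := gold_lt_two
  intro a b hab
  fin_cases a <;> fin_cases b <;> simp [signedCoords, inv_gold] at hab ⊢ <;> linarith

theorem signedCoords_injective : Function.Injective signedCoords := by
  intro ε ε' h
  have hτ := gold_pos.ne'
  ext i
  fin_cases i
  · simpa [signedCoords, hτ] using congrFun h 0
  · simpa [signedCoords] using congrFun h 1
  · simpa [signedCoords, hτ] using congrFun h 2

theorem normalVec_inj {σ σ' : Equiv.Perm (Fin 4)} {ε ε' : Fin 3 → ℝ}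
    (hε : ∀ i, ε i = 1 ∨ ε i = -1) (hε' : ∀ i, ε' i = 1 ∨ ε' i = -1)
    (h : normalVec σ ε = normalVec σ' ε') : σ = σ' ∧ ε = ε' := by
  have htail : signedCoords ε ∘ σ = signedCoords ε' ∘ σ' := (Fin.cons_inj.1 h).2
  have hσ : σ = σ' := Equiv.ext fun i => signedCoords_one_injective <| by
    rw [← abs_signedCoords hε, ← abs_signedCoords hε']
    exact congrArg abs (congrFun htail i)
  subst hσ
  exact ⟨rfl, signedCoords_injective (σ.surjective.injective_comp_right htail)⟩

theorem intCast_units_eq_one_or (u : ℤˣ) : ((u : ℤ) : ℝ) = 1 ∨ ((u : ℤ) : ℝ) = -1 := by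
  rcases Int.units_eq_one_or u with rfl | rfl <;> simp

-- signs are indexed by `ℤˣ` so that the parameter space is a finite type
def normalParam (p : alternatingGroup (Fin 4) × (Fin 3 → ℤˣ)) : Fin 5 → ℝ :=
  normalVec p.1 fun i => ((p.2 i : ℤ) : ℝ)

theorem range_normalParam : Set.range normalParam = Nset := by
  ext v
  rw [mem_Nset]
  constructor
  · rintro ⟨⟨σ, s⟩, rfl⟩
    exact ⟨σ, Equiv.Perm.mem_alternatingGroup.1 σ.2, _, fun i => intCast_units_eq_one_or (s i),
      rfl⟩
  · rintro ⟨σ, hσ, ε, hε, rfl⟩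
    refine ⟨⟨⟨σ, Equiv.Perm.mem_alternatingGroup.2 hσ⟩, fun i => if ε i = 1 then 1 else -1⟩, ?_⟩
    refine congrArg (normalVec σ) (funext fun i => ?_)
    rcases hε i with h | h <;> norm_num [h]

theorem normalParam_injective : Function.Injective normalParam := by
  rintro ⟨σ, s⟩ ⟨σ', s'⟩ h
  obtain ⟨hσ, hs⟩ := normalVec_inj (fun i => intCast_units_eq_one_or (s i))
    (fun i => intCast_units_eq_one_or (s' i)) h
  refine Prod.ext (Subtype.ext hσ) (funext fun i => Units.ext ?_)
  exact_mod_cast congrFun hs i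

instance : Fintype Nset :=
  (range_normalParam ▸ Set.finite_range normalParam).fintype

theorem card_Nset : Fintype.card Nset = 96 := by
  rw [← Nat.card_eq_fintype_card, ← range_normalParam,
    Nat.card_range_of_injective normalParam_injective, Nat.card_prod, Nat.card_fun,
    Nat.card_eq_fintype_card (α := ℤˣ), Fintype.card_units_int]
  have h := two_mul_nat_card_alternatingGroup (α := Fin 4)
  rw [Nat.card_perm, Nat.card_fin, show (4 : ℕ).factorial = 24 from rfl] at h
  rw [Nat.card_fin]
  omega

theorem normalVec_one (ε : Fin 3 → ℝ) :
    normalVec 1 ε = ![Real.sqrt (2 * gold), ε 0 * gold, ε 1, ε 2 * gold⁻¹, 0] := by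
  funext k; fin_cases k <;> rfl

theorem normalVec_swap_swap (ε : Fin 3 → ℝ) :
    normalVec (Equiv.swap 0 1 * Equiv.swap 2 3) ε =
      ![Real.sqrt (2 * gold), ε 1, ε 0 * gold, 0, ε 2 * gold⁻¹] := by
  funext k; fin_cases k <;> rfl

theorem span_Nset : Submodule.span ℝ Nset = ⊤ := by
  set S := Submodule.span ℝ Nset
  set e : Fin 5 → Fin 5 → ℝ := fun k => Pi.single k 1
  have hN (σ : Equiv.Perm (Fin 4)) (hσ : σ.sign = 1) (a b c : ℝ) (ha : a = 1 ∨ a = -1)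
      (hb : b = 1 ∨ b = -1) (hc : c = 1 ∨ c = -1) : normalVec σ ![a, b, c] ∈ S :=
    Submodule.subset_span <| mem_Nset.2 ⟨σ, hσ, _, fun i => by fin_cases i <;> assumption, rfl⟩
  have hmem {c : ℝ} (hc : c ≠ 0) {k : Fin 5} {v : Fin 5 → ℝ} (hv : v ∈ S) (h : c • e k = v) :
      e k ∈ S := (S.smul_mem_iff hc).1 (h ▸ hv)
  have hu := hN 1 (by simp) 1 1 1 (.inl rfl) (.inl rfl) (.inl rfl)
  have hτ : gold ≠ 0 := gold_pos.ne'
  have hs : Real.sqrt (2 * gold) ≠ 0 := (Real.sqrt_pos.2 (by linarith [gold_pos])).ne'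
  -- flipping one sign of `hu` isolates `e 1`, `e 2`, `e 3`; then `hu` gives `e 0`,
  -- and a vector with a nonzero last coordinate gives `e 4`
  have he1 : e 1 ∈ S := hmem (mul_ne_zero two_ne_zero hτ)
    (S.sub_mem hu (hN 1 (by simp) (-1) 1 1 (.inr rfl) (.inl rfl) (.inl rfl))) <| by
      ext k; fin_cases k <;> simp [e, normalVec_one, -Matrix.cons_sub]
      ring
  have he2 : e 2 ∈ S := hmem two_ne_zero
    (S.sub_mem hu (hN 1 (by simp) 1 (-1) 1 (.inl rfl) (.inr rfl) (.inl rfl))) <| by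
      ext k; fin_cases k <;> simp [e, normalVec_one, -Matrix.cons_sub]
      ring
  have he3 : e 3 ∈ S := hmem (mul_ne_zero two_ne_zero (inv_ne_zero hτ))
    (S.sub_mem hu (hN 1 (by simp) 1 1 (-1) (.inl rfl) (.inl rfl) (.inr rfl))) <| by
      ext k; fin_cases k <;> simp [e, normalVec_one, -Matrix.cons_sub]
      ring
  have he0 : e 0 ∈ S := hmem hs
    (S.sub_mem (S.sub_mem (S.sub_mem hu (S.smul_mem gold he1)) he2) (S.smul_mem gold⁻¹ he3)) <| by
      ext k; fin_cases k <;> simp [e, normalVec_one, -Matrix.cons_sub]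
  have he4 : e 4 ∈ S := hmem (inv_ne_zero hτ)
    (S.sub_mem (S.sub_mem (S.sub_mem
      (hN (Equiv.swap 0 1 * Equiv.swap 2 3) (by decide) 1 1 1 (.inl rfl) (.inl rfl) (.inl rfl))
      (S.smul_mem (Real.sqrt (2 * gold)) he0)) he1) (S.smul_mem gold he2)) <| by
      ext k; fin_cases k <;> simp [e, normalVec_swap_swap, -Matrix.cons_sub]
  rw [eq_top_iff, ← (Pi.basisFun ℝ (Fin 5)).span_eq, Submodule.span_le]
  rintro _ ⟨k, rfl⟩
  rw [Pi.basisFun_apply]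
  fin_cases k
  exacts [he0, he1, he2, he3, he4]

def phiLin : (gSet × (Nset → ℝ)) →ₗ[ℝ] (Nset → Fin 5 → ℝ) where
  toFun := Phi
  map_add' p q := by
    funext n
    simp only [Phi, Prod.fst_add, Prod.snd_add, Submodule.coe_add, add_mulVec, Pi.add_apply,
      add_smul]
    abel
  map_smul' r p := by
    funext n
    simp only [Phi, Prod.smul_fst, Prod.smul_snd, Submodule.coe_smul, smul_mulVec, Pi.smul_apply,
      smul_eq_mul, mul_smul, RingHom.id_apply, smul_add]

theorem Phi_mem_Wsub (p : gSet × (Nset → ℝ)) : Phi p ∈ Wsub := by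
  intro m n _ hmn
  have hskew := Bform_mulVec_add_Bform_mulVec p.1.2 m n
  simp only [Phi, Bform, Pi.add_apply, Pi.smul_apply, smul_eq_mul] at hskew hmn ⊢
  linear_combination hskew + (p.2 m + p.2 n) * hmn

theorem Phi_injective : Function.Injective Phi := by
  change Function.Injective phiLin
  refine (injective_iff_map_eq_zero phiLin).2 ?_
  rintro ⟨⟨X, hX⟩, c⟩ h
  have hn (n : Nset) : X *ᵥ n + c n • (n : Fin 5 → ℝ) = 0 := congrFun h n
  have hc (n : Nset) : c n = 0 := by
    have h0 : Bform (X *ᵥ n + c n • (n : Fin 5 → ℝ)) n = 0 := by rw [hn n]; simp [Bform]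
    rw [Bform_add_left, Bform_smul_left, Bform_mulVec_self hX, zero_add] at h0
    exact (mul_eq_zero.1 h0).resolve_right (Bform_self_ne_zero_of_mem_Nset n.2)
  have hX0 : X = 0 := Matrix.eq_zero_of_mulVec_eq_zero_of_span_eq_top span_Nset fun v hv => by
    simpa [hc] using hn ⟨v, hv⟩
  exact Prod.ext (Subtype.ext hX0) (funext hc)

/-- Φ is injective and its image is contained in W; consequently
dim W ≥ dim 𝔤 + 96 = 106. -/
theorem stmt1 :
    Function.Injective Phi ∧ (∀ p, Phi p ∈ Wsub) ∧
    Module.finrank ℝ gSet + 96 = 106 ∧ 106 ≤ Module.finrank ℝ Wsub := by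
  have hdim : Module.finrank ℝ (gSet × (Nset → ℝ)) = 106 := by
    rw [Module.finrank_prod, finrank_gSet, Module.finrank_fintype_fun_eq_card, card_Nset]
  refine ⟨Phi_injective, Phi_mem_Wsub, by rw [finrank_gSet], hdim ▸ ?_⟩
  exact LinearMap.finrank_le_finrank_of_injective (f := phiLin.codRestrict Wsub Phi_mem_Wsub)
    fun _ _ h => Phi_injective (congrArg Subtype.val h)
end
end

section
/- Let C be the 24-element set consisting of the 8 vectors obtained by permuting the last 4 coordinates of (√(2τ), ±2, 0, 0, 0) together with the 16 vectors (√(2τ), ±1, ±1, ±1, ±1). Then for all distinct u, v ∈ C one has B(u,v)² > B(u,u)·B(v,v); in particular B(u,v) ≠ 0, so the 24 corresponding hyperplanes in hyperbolic 4-space are pairwise disjoint (ultraparallel). -/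
/-!
Every vector of `C` is `(√(2τ), f)` where `f` runs over the 24 vertices of a 24-cell of
circumradius 2: `f ⬝ f = 4`, and distinct vertices satisfy `f ⬝ g ≤ 2`. As `√(2τ)² = 1 + √5`,
this gives `B(u,u) = 3 - √5` and `B(u,v) ≤ 1 - √5 < -(3 - √5)` for `u ≠ v`, whence
`B(u,v)² > B(u,u) B(v,v)`. A point `x` of `ℍ⁴` on both hyperplanes would be orthogonal to
`B(v,v) u - B(u,v) v`, which is timelike by that inequality; but the orthogonal complement of
a timelike vector is spacelike.
-/

noncomputable section

/-- Item (1): the 8 vectors obtained by permuting the last 4 coordinates of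
(√(2τ), ±2, 0, 0, 0). -/
def item1 : Set (Fin 5 → ℝ) :=
  {v | ∃ (j : Fin 4) (s : ℝ), (s = 1 ∨ s = -1) ∧
    v = Fin.cons (Real.sqrt (2 * gold)) (fun i => if i = j then s * 2 else 0)}

/-- Item (2): the 16 vectors (√(2τ), ±1, ±1, ±1, ±1). -/
def item2 : Set (Fin 5 → ℝ) :=
  {v | ∃ ε : Fin 4 → ℝ, (∀ i, ε i = 1 ∨ ε i = -1) ∧
    v = Fin.cons (Real.sqrt (2 * gold)) ε}

/-- Item (3): the 96 vectors obtained by applying even permutations of the last 4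
coordinates to (√(2τ), ±τ, ±1, ±τ⁻¹, 0), with all 8 sign choices. -/
def item3 : Set (Fin 5 → ℝ) :=
  {v | ∃ σ : Equiv.Perm (Fin 4), Equiv.Perm.sign σ = 1 ∧
    ∃ ε : Fin 3 → ℝ, (∀ i, ε i = 1 ∨ ε i = -1) ∧
      v = Fin.cons (Real.sqrt (2 * gold))
            (fun i => ![ε 0 * gold, ε 1, ε 2 * gold⁻¹, 0] (σ i))}

/-- The 24 normal vectors of items (1) and (2). -/
def Cset : Set (Fin 5 → ℝ) := item1 ∪ item2

/-- The 120 normal vectors of the right-angled hyperbolic 120-cell. -/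
def Vset : Set (Fin 5 → ℝ) := Cset ∪ item3

lemma Bform_cons (a b : ℝ) (f g : Fin 4 → ℝ) :
    Bform (Fin.cons a f) (Fin.cons b g) = -(a * b) + f ⬝ᵥ g := by
  change -(a * b) + f 0 * g 0 + f 1 * g 1 + f 2 * g 2 + f 3 * g 3 = _
  rw [dotProduct, Fin.sum_univ_four]
  ring

lemma Bform_self_nonneg_of_apply_zero {y : Fin 5 → ℝ} (hy : y 0 = 0) : 0 ≤ Bform y y := by
  rw [Bform, hy]
  nlinarith [sq_nonneg (y 1), sq_nonneg (y 2), sq_nonneg (y 3), sq_nonneg (y 4)]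

lemma Bform_ne_zero_of_timelike {x w : Fin 5 → ℝ} (hx : Bform x x < 0) (hw : Bform w w < 0) :
    Bform x w ≠ 0 := by
  intro hxw
  have hx0 : x 0 ≠ 0 := by
    intro h
    have := Bform_self_nonneg_of_apply_zero h
    linarith
  -- `w - r • x` has time coordinate `0`, yet its square is `B(w,w) + r² B(x,x) < 0`
  set r := w 0 / x 0
  have hy : (w - r • x) 0 = 0 := by simp [r, hx0]
  have expand : Bform (w - r • x) (w - r • x) =
      Bform w w - 2 * r * Bform x w + r ^ 2 * Bform x x := by
    simp only [Bform, Pi.sub_apply, Pi.smul_apply, smul_eq_mul]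
    ring
  have := Bform_self_nonneg_of_apply_zero hy
  rw [expand, hxw] at this
  nlinarith [sq_nonneg r]

lemma Bform_ne_zero_of_orthogonal_to_ultraparallel {u v x : Fin 5 → ℝ} (hv : 0 < Bform v v)
    (huv : Bform u u * Bform v v < Bform u v ^ 2) (hx : Bform x x < 0) (hxu : Bform x u = 0) :
    Bform x v ≠ 0 := by
  intro hxv
  set w := Bform v v • u - Bform u v • v
  have hww : Bform w w = Bform v v * (Bform u u * Bform v v - Bform u v ^ 2) := by
    simp only [w, Bform, Pi.sub_apply, Pi.smul_apply, smul_eq_mul]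
    ring
  have hxw : Bform x w = Bform v v * Bform x u - Bform u v * Bform x v := by
    simp only [w, Bform, Pi.sub_apply, Pi.smul_apply, smul_eq_mul]
    ring
  refine Bform_ne_zero_of_timelike hx ?_ (by rw [hxw, hxu, hxv]; ring)
  rw [hww]
  exact mul_neg_of_pos_of_neg hv (by linarith)

lemma dotProduct_self_of_sign {ι : Type*} [Fintype ι] {ε : ι → ℝ}
    (hε : ∀ i, ε i = 1 ∨ ε i = -1) : ε ⬝ᵥ ε = Fintype.card ι := by
  have h : ∀ i, ε i * ε i = 1 := fun i => by rcases hε i with h | h <;> simp [h]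
  simp [dotProduct, h]

lemma dotProduct_le_of_sign_ne {ι : Type*} [Fintype ι] {ε δ : ι → ℝ}
    (hε : ∀ i, ε i = 1 ∨ ε i = -1) (hδ : ∀ i, δ i = 1 ∨ δ i = -1) (hne : ε ≠ δ) :
    ε ⬝ᵥ δ ≤ Fintype.card ι - 2 := by
  obtain ⟨i₀, hi₀⟩ := Function.ne_iff.mp hne
  have hterm : ∀ i, ε i ≠ δ i → 1 - ε i * δ i = 2 := fun i hi => by
    rcases hε i with h | h <;> rcases hδ i with h' | h' <;> simp_all <;> norm_num
  have hnonneg : ∀ i, 0 ≤ 1 - ε i * δ i := fun i => by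
    rcases hε i with h | h <;> rcases hδ i with h' | h' <;> simp [h, h']
  have : (2 : ℝ) ≤ ∑ i, (1 - ε i * δ i) :=
    hterm i₀ hi₀ ▸ Finset.single_le_sum (fun i _ => hnonneg i) (Finset.mem_univ i₀)
  simp only [Finset.sum_sub_distrib, Finset.sum_const, Finset.card_univ, nsmul_eq_mul,
    mul_one] at this
  simp only [dotProduct]
  linarith

lemma sqrt_two_gold_mul_self : √(2 * gold) * √(2 * gold) = 1 + √5 := by
  rw [Real.mul_self_sqrt (by unfold gold; positivity)]
  unfold gold
  ring

def cellTails : Set (Fin 4 → ℝ) :=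
  {f | (∃ (j : Fin 4) (s : ℝ), (s = 1 ∨ s = -1) ∧ f = Pi.single j (s * 2)) ∨
    ∀ i, f i = 1 ∨ f i = -1}

lemma exists_mem_cellTails_of_mem_Cset {u : Fin 5 → ℝ} (hu : u ∈ Cset) :
    ∃ f ∈ cellTails, u = Fin.cons (√(2 * gold)) f := by
  rcases hu with ⟨j, s, hs, rfl⟩ | ⟨ε, hε, rfl⟩
  · exact ⟨_, Or.inl ⟨j, s, hs, funext fun i => (Pi.single_apply j (s * 2) i).symm⟩, rfl⟩
  · exact ⟨ε, Or.inr hε, rfl⟩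

lemma dotProduct_self_of_mem_cellTails {f : Fin 4 → ℝ} (hf : f ∈ cellTails) : f ⬝ᵥ f = 4 := by
  rcases hf with ⟨j, s, hs, rfl⟩ | hε
  · rcases hs with rfl | rfl <;> norm_num [single_dotProduct]
  · simp [dotProduct_self_of_sign hε]

lemma single_dotProduct_sign_le {j : Fin 4} {s : ℝ} (hs : s = 1 ∨ s = -1) {ε : Fin 4 → ℝ}
    (hε : ∀ i, ε i = 1 ∨ ε i = -1) : Pi.single j (s * 2) ⬝ᵥ ε ≤ 2 := by
  rw [single_dotProduct]
  rcases hs with rfl | rfl <;> rcases hε j with h | h <;> norm_num [h]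

lemma dotProduct_le_two_of_mem_cellTails {f g : Fin 4 → ℝ} (hf : f ∈ cellTails)
    (hg : g ∈ cellTails) (hfg : f ≠ g) : f ⬝ᵥ g ≤ 2 := by
  rcases hf with ⟨j, s, hs, rfl⟩ | hε <;> rcases hg with ⟨k, t, ht, rfl⟩ | hδ
  · rw [single_dotProduct, Pi.single_apply]
    split_ifs with hjk
    · subst hjk
      rcases hs with rfl | rfl <;> rcases ht with rfl | rfl <;>
        first | exact absurd rfl hfg | norm_num
    · norm_num
  · exact single_dotProduct_sign_le hs hδ
  · exact dotProduct_comm f _ ▸ single_dotProduct_sign_le ht hε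
  · exact (dotProduct_le_of_sign_ne hε hδ hfg).trans_eq (by norm_num)

lemma Bform_self_of_mem_Cset {u : Fin 5 → ℝ} (hu : u ∈ Cset) : Bform u u = 3 - √5 := by
  obtain ⟨f, hf, rfl⟩ := exists_mem_cellTails_of_mem_Cset hu
  rw [Bform_cons, sqrt_two_gold_mul_self, dotProduct_self_of_mem_cellTails hf]
  ring

lemma Bform_le_of_mem_Cset {u v : Fin 5 → ℝ} (hu : u ∈ Cset) (hv : v ∈ Cset) (huv : u ≠ v) :
    Bform u v ≤ 1 - √5 := by
  obtain ⟨f, hf, rfl⟩ := exists_mem_cellTails_of_mem_Cset hu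
  obtain ⟨g, hg, rfl⟩ := exists_mem_cellTails_of_mem_Cset hv
  have hfg : f ≠ g := by rintro rfl; exact huv rfl
  rw [Bform_cons, sqrt_two_gold_mul_self]
  linarith [dotProduct_le_two_of_mem_cellTails hf hg hfg]

/-- For distinct u, v in the 24-element set C one has B(u,v)² > B(u,u)·B(v,v); in
particular B(u,v) ≠ 0, and the corresponding hyperplanes of hyperbolic 4-space are
disjoint. -/
theorem stmt7 :
    ∀ u ∈ Cset, ∀ v ∈ Cset, u ≠ v →
      Bform u v ^ 2 > Bform u u * Bform v v ∧ Bform u v ≠ 0 ∧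
      ¬∃ x : Fin 5 → ℝ, Bform x x = -1 ∧ Bform x u = 0 ∧ Bform x v = 0 := by
  intro u hu v hv huv
  have h5 : 2 < √5 := (Real.lt_sqrt (by norm_num)).2 (by norm_num)
  have h5' : √5 < 3 := (Real.sqrt_lt' (by norm_num)).2 (by norm_num)
  have hlt : Bform u v < -(3 - √5) := by linarith [Bform_le_of_mem_Cset hu hv huv]
  have hsq : Bform u u * Bform v v < Bform u v ^ 2 := by
    rw [Bform_self_of_mem_Cset hu, Bform_self_of_mem_Cset hv]
    nlinarith
  refine ⟨hsq, hlt.trans (by linarith) |>.ne, ?_⟩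
  rintro ⟨x, hx, hxu, hxv⟩
  exact Bform_ne_zero_of_orthogonal_to_ultraparallel (by rw [Bform_self_of_mem_Cset hv]; linarith)
    hsq (by linarith) hxu hxv
end
end
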